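/- Suppose β̂ ~ N(β, V_β), and for each model M in a finite set 𝓜 let P(M) be a fixed matrix with V_M = P(M)V_β P(M)' having strictly positive diagonal entries. Define t_{h·M} = (P(M)(β̂−β))_h / √(V_M(h,h)). If C ≥ 0 satisfies P( max_{M∈𝓜} max_h |t_{h·M}| ≤ C ) ≥ 1−α, and M̂ = M̂(β̂) is any 𝓜-valued function of β̂, then P( for all h: |(P(M̂)β̂)_h − (P(M̂)β)_h| ≤ C √(V_{M̂}(h,h)) ) ≥ 1−α. -/
import Mathlib


open MeasureTheory ProbabilityTheory Matrix

/-- PoSI coverage guarantee.  If C satisfies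
P( max_{M∈𝓜} max_h |t_{h·M}| ≤ C ) ≥ 1−α for the standardized statistics
t_{h·M} = (P(M)(β̂−β))_h / √(V_M(h,h)) with V_M = P(M) V_β P(M)', then for any
data-dependent selector M̂ = M̂(β̂), the PoSI band around the restricted estimate
P(M̂)β̂ covers the selected surrogate P(M̂)β with probability at least 1−α. -/
theorem stmt5
    {Ω : Type*} [MeasurableSpace Ω] (μpr : Measure Ω) [IsProbabilityMeasure μpr]
    (H : ℕ) (β : Fin H → ℝ) (Vβ : Matrix (Fin H) (Fin H) ℝ) (hVβ : Vβ.PosSemidef)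
    (X : Ω → Fin H → ℝ) (hXmeas : Measurable X)
    (hX : ∀ a : Fin H → ℝ,
      Measure.map (fun ω => ∑ h, a h * X ω h) μpr =
        gaussianReal (∑ h, a h * β h) (Real.toNNReal (a ⬝ᵥ Vβ *ᵥ a)))
    (𝓜 : Type*) [Fintype 𝓜] [Nonempty 𝓜]
    (P : 𝓜 → Matrix (Fin H) (Fin H) ℝ)
    (hdiag : ∀ (M : 𝓜) (h : Fin H), 0 < (P M * Vβ * (P M)ᵀ) h h)
    (α : ℝ) (hα : α ∈ Set.Ioo (0 : ℝ) 1)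
    (C : ℝ) (hC0 : 0 ≤ C)
    (hC : ENNReal.ofReal (1 - α) ≤
      μpr {ω | ∀ (M : 𝓜) (h : Fin H),
        |(P M *ᵥ (X ω - β)) h / Real.sqrt ((P M * Vβ * (P M)ᵀ) h h)| ≤ C})
    (Mhat : (Fin H → ℝ) → 𝓜) :
    ENNReal.ofReal (1 - α) ≤
      μpr {ω | ∀ h : Fin H,
        |(P (Mhat (X ω)) *ᵥ X ω) h - (P (Mhat (X ω)) *ᵥ β) h| ≤
          C * Real.sqrt ((P (Mhat (X ω)) * Vβ * (P (Mhat (X ω)))ᵀ) h h)} := by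
  refine le_trans hC (measure_mono ?_)
  intro ω hω h
  set M := Mhat (X ω)
  have hv := hdiag M h
  have hs : 0 < Real.sqrt ((P M * Vβ * (P M)ᵀ) h h) := Real.sqrt_pos.mpr hv
  have := hω M h
  rw [abs_div, div_le_iff₀ (by positivity)] at this
  have heq : (P M *ᵥ (X ω - β)) h = (P M *ᵥ X ω) h - (P M *ᵥ β) h := by
    simp [mulVec_sub]
  calc |(P M *ᵥ X ω) h - (P M *ᵥ β) h| = |(P M *ᵥ (X ω - β)) h| := by rw [heq]
    _ ≤ C * |Real.sqrt ((P M * Vβ * (P M)ᵀ) h h)| := this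
    _ = C * Real.sqrt ((P M * Vβ * (P M)ᵀ) h h) := by rw [abs_of_pos hs]
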